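/- arXiv:1602.01675 — 2 statements merged into one kernel-verified Lean document; each statement's English description precedes it below -/
import Mathlib

section
/- For all real parameters α, β, the coefficient functions Ā(τ,σ) = 1/6 + (α − √3/6)·P_1(σ) + α·P_1(τ) + β·P_1(τ)·P_1(σ), B̄(τ) = 1 − τ, B̂(τ) = 1, C(τ) = τ satisfy (1) the symplectic conditions: B̂(τ)(1 − C(τ)) = B̄(τ) for all τ ∈ [0,1] and B̂(τ)(B̄(σ) − Ā(τ,σ)) = B̂(σ)(B̄(τ) − Ā(σ,τ)) for all τ, σ ∈ [0,1]; and (2) the third-order condition ∫₀¹ ∫₀¹ Ā(τ,σ) dσ dτ = 1/6. -/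
/-!
With `B̂ ≡ 1` the second symplectic condition reads `Ā(σ,τ) − Ā(τ,σ) = σ − τ`. All terms of `Ā`
are symmetric in `(τ,σ)` except `−(√3/6) P₁(σ)`, whose contribution to the difference is
`−(√3/6)(P₁(τ) − P₁(σ)) = σ − τ` because `P₁(x) = √3 (2x − 1)`. For the order condition,
`P₁ = √3 · (x(x − 1))'` with `x(x − 1)` vanishing at both ends, so `P₁` integrates to zero over
`[0,1]` and only the constant `1/6` survives.
-/

open intervalIntegral

/-- The `n`-th normalized shifted Legendre polynomial on `[0,1]`, via Rodrigues' formula.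
For `n = 0` this formula gives the constant `1`. -/
noncomputable def legP (n : ℕ) (x : ℝ) : ℝ :=
  Real.sqrt (2 * n + 1) / n.factorial *
    iteratedDeriv n (fun t : ℝ => t ^ n * (t - 1) ^ n) x

lemma hasDerivAt_mul_sub_one (x : ℝ) : HasDerivAt (fun t : ℝ => t * (t - 1)) (2 * x - 1) x :=
  ((hasDerivAt_id' x).fun_mul ((hasDerivAt_id' x).sub_const 1)).congr_deriv (by ring)

lemma legP_one (x : ℝ) : legP 1 x = √3 * (2 * x - 1) := by
  simp only [legP, iteratedDeriv_one, pow_one, (hasDerivAt_mul_sub_one x).deriv]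
  norm_num

lemma continuous_legP_one : Continuous (legP 1) := by
  simp_rw [funext legP_one]; fun_prop

lemma integral_legP_one : ∫ x in (0:ℝ)..1, legP 1 x = 0 := by
  have hprim (x : ℝ) : HasDerivAt (fun t => √3 * (t * (t - 1))) (legP 1 x) x :=
    legP_one x ▸ (hasDerivAt_mul_sub_one x).const_mul √3
  rw [integral_eq_sub_of_hasDerivAt (fun x _ => hprim x)
    (continuous_legP_one.intervalIntegrable 0 1)]
  ring

lemma integral_add_mul_legP_one (a b : ℝ) : ∫ x in (0:ℝ)..1, a + b * legP 1 x = a := by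
  rw [integral_add intervalIntegrable_const
    (continuous_legP_one.intervalIntegrable 0 1 |>.const_mul b), integral_const_mul,
    integral_legP_one]
  simp

/-- The two-parameter family
`Ā(τ,σ) = 1/6 + (α − √3/6)P₁(σ) + αP₁(τ) + βP₁(τ)P₁(σ)`, `B̄(τ) = 1 − τ`, `B̂ = 1`,
`C(τ) = τ` satisfies the symplectic conditions and the third-order condition. -/
theorem order3_family_symplectic
    (α β : ℝ) (A : ℝ → ℝ → ℝ)
    (hA : ∀ τ σ : ℝ, A τ σ =
      1 / 6 + (α - Real.sqrt 3 / 6) * legP 1 σ + α * legP 1 τ + β * legP 1 τ * legP 1 σ)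
    (Bbar Bhat C : ℝ → ℝ)
    (hBbar : ∀ τ, Bbar τ = 1 - τ) (hBhat : ∀ τ, Bhat τ = 1) (hC : ∀ τ, C τ = τ) :
    ((∀ τ ∈ Set.Icc (0:ℝ) 1, Bhat τ * (1 - C τ) = Bbar τ) ∧
     (∀ τ ∈ Set.Icc (0:ℝ) 1, ∀ σ ∈ Set.Icc (0:ℝ) 1,
       Bhat τ * (Bbar σ - A τ σ) = Bhat σ * (Bbar τ - A σ τ))) ∧
    (∫ τ in (0:ℝ)..1, ∫ σ in (0:ℝ)..1, A τ σ) = 1 / 6 := by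
  have hA_sub (τ σ : ℝ) : A σ τ - A τ σ = σ - τ := by
    have h3 : √3 * √3 = 3 := Real.mul_self_sqrt (by norm_num)
    rw [hA, hA, legP_one, legP_one]
    linear_combination (σ - τ) / 3 * h3
  have hA_inner (τ : ℝ) : ∫ σ in (0:ℝ)..1, A τ σ = 1 / 6 + α * legP 1 τ := by
    simp_rw [hA]
    convert integral_add_mul_legP_one (1 / 6 + α * legP 1 τ)
      (α - √3 / 6 + β * legP 1 τ) using 3
    ring
  refine ⟨⟨fun τ _ => by rw [hBhat, hC, hBbar, one_mul], fun τ _ σ _ => ?_⟩, ?_⟩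
  · rw [hBhat, hBhat, hBbar, hBbar]
    linarith [hA_sub τ σ]
  · simp_rw [hA_inner]
    simpa using integral_add_mul_legP_one (1 / 6) α
end

section
/- Let α : ℕ × ℕ → ℝ be finitely supported with α(0,0) = 1/6, α(1,0) = √3/12, and α(2,0) = √5/60, and define Ā(τ,σ) = Σ_{i,j} α(i,j)·P_i(τ)·P_j(σ). If ∫₀¹ ∫₀¹ ∫₀¹ Ā(τ,σ)·Ā(τ,ρ) dρ dσ dτ = 1/20, then α(i,0) = 0 for all i > 2. -/
open intervalIntegral

/-!
Repeated integration by parts against `Xⁿ (X - 1)ⁿ`, whose derivatives of order `< n` vanish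
at `0` and `1`, shows that `legP n` is orthogonal to all polynomials of lower degree, and the
Beta integral gives its norm, so the `legP n` are orthonormal on `[0, 1]`. Integrating
`Ā(τ, σ)` in `σ` leaves the column `∑ᵢ α(i, 0) legP i τ`, hence the triple integral is its
squared norm `∑ᵢ α(i, 0)²`. The three prescribed coefficients already contribute
`1/36 + 1/48 + 1/720 = 1/20`, so all the others vanish.
-/

open Polynomial Finset

namespace Polynomial

variable {R : Type*}

theorem eval_iterate_derivative_eq_zero_of_pow_dvd [CommRing R] {p : R[X]} {t : R} {n j : ℕ}
    (h : (X - C t) ^ n ∣ p) (hj : j < n) : (derivative^[j] p).eval t = 0 :=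
  dvd_iff_isRoot.mp <| (dvd_pow_self _ (Nat.sub_ne_zero_of_lt hj)).trans
    (pow_sub_dvd_iterate_derivative_of_pow_dvd j h)

theorem Monic.iterate_derivative_natDegree [Semiring R] {p : R[X]} (hp : p.Monic) :
    derivative^[p.natDegree] p = C (p.natDegree.factorial : R) := by
  have hdeg : (derivative^[p.natDegree] p).natDegree = 0 := by
    simpa using natDegree_iterate_derivative p p.natDegree
  rw [eq_C_of_natDegree_eq_zero hdeg, coeff_iterate_derivative, zero_add, hp.coeff_natDegree,
    Nat.descFactorial_self, nsmul_one]

theorem iteratedDeriv_eval {𝕜 : Type*} [NontriviallyNormedField 𝕜] (p : 𝕜[X]) (n : ℕ) :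
    iteratedDeriv n (fun x => p.eval x) = fun x => (derivative^[n] p).eval x := by
  induction n with
  | zero => simp
  | succ n ih =>
    rw [iteratedDeriv_succ, ih, Function.iterate_succ_apply']
    ext x
    exact Polynomial.deriv _

theorem integral_eval_mul_iterate_derivative {a b : ℝ} (p q : ℝ[X]) (n : ℕ)
    (hp : ∀ j < n, (derivative^[j] p).eval a = 0 ∧ (derivative^[j] p).eval b = 0) :
    ∫ x in a..b, q.eval x * (derivative^[n] p).eval x
      = (-1) ^ n * ∫ x in a..b, (derivative^[n] q).eval x * p.eval x := by
  induction n generalizing q with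
  | zero => simp
  | succ n ih =>
    obtain ⟨ha, hb⟩ := hp n n.lt_succ_self
    rw [Function.iterate_succ_apply', integral_mul_deriv_eq_deriv_mul
        (fun x _ => q.hasDerivAt x) (fun x _ => (derivative^[n] p).hasDerivAt x)
        (q.derivative.continuous.intervalIntegrable _ _)
        ((derivative (derivative^[n] p)).continuous.intervalIntegrable _ _),
      ha, hb, ih _ fun j hj => hp j (hj.trans n.lt_succ_self), ← Function.iterate_succ_apply]
    ring

end Polynomial

open Complex in
theorem integral_pow_mul_one_sub_pow (a b : ℕ) :
    ∫ x in (0 : ℝ)..1, x ^ a * (1 - x) ^ b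
      = (a.factorial * b.factorial : ℝ) / (a + b + 1).factorial := by
  have h := betaIntegral_eq_Gamma_mul_div (a + 1) (b + 1)
    (by simp; positivity) (by simp; positivity)
  rw [show (a + 1 : ℂ) + (b + 1) = ((a + b + 1 : ℕ) : ℂ) + 1 by push_cast; ring,
    Gamma_nat_eq_factorial, Gamma_nat_eq_factorial, Gamma_nat_eq_factorial] at h
  simp only [betaIntegral, add_sub_cancel_right, cpow_natCast] at h
  rw [← ofReal_inj, ← intervalIntegral.integral_ofReal]
  push_cast
  exact h

noncomputable def rodriguesPoly (n : ℕ) : ℝ[X] := X ^ n * (X - 1) ^ n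

theorem monic_X_sub_one_pow {R : Type*} [Ring R] (n : ℕ) : ((X - 1 : R[X]) ^ n).Monic := by
  simpa using (monic_X_sub_C (1 : R)).pow n

theorem rodriguesPoly_monic (n : ℕ) : (rodriguesPoly n).Monic :=
  (monic_X_pow n).mul (monic_X_sub_one_pow n)

theorem natDegree_rodriguesPoly (n : ℕ) : (rodriguesPoly n).natDegree = 2 * n := by
  rw [rodriguesPoly, (monic_X_pow n).natDegree_mul (monic_X_sub_one_pow n),
    natDegree_X_pow, natDegree_pow, ← C_1, natDegree_X_sub_C, two_mul, mul_one]

theorem eval_iterate_derivative_rodriguesPoly_of_lt {n j : ℕ} (hj : j < n) :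
    (derivative^[j] (rodriguesPoly n)).eval 0 = 0 ∧
      (derivative^[j] (rodriguesPoly n)).eval 1 = 0 :=
  ⟨eval_iterate_derivative_eq_zero_of_pow_dvd (by simp [rodriguesPoly]) hj,
    eval_iterate_derivative_eq_zero_of_pow_dvd (by simp [rodriguesPoly]) hj⟩

theorem natDegree_iterate_derivative_rodriguesPoly_le (n : ℕ) :
    (derivative^[n] (rodriguesPoly n)).natDegree ≤ n := by
  simpa [natDegree_rodriguesPoly, two_mul] using natDegree_iterate_derivative (rodriguesPoly n) n

theorem integral_eval_mul_iterate_derivative_rodriguesPoly {q : ℝ[X]} {n : ℕ}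
    (hq : q.natDegree < n) :
    ∫ x in (0 : ℝ)..1, q.eval x * (derivative^[n] (rodriguesPoly n)).eval x = 0 := by
  rw [integral_eval_mul_iterate_derivative _ _ _ fun j hj =>
    eval_iterate_derivative_rodriguesPoly_of_lt hj, iterate_derivative_eq_zero hq]
  simp

theorem integral_rodriguesPoly (n : ℕ) :
    ∫ x in (0 : ℝ)..1, (rodriguesPoly n).eval x
      = (-1) ^ n * ((n.factorial * n.factorial : ℝ) / (2 * n + 1).factorial) := by
  rw [two_mul, ← integral_pow_mul_one_sub_pow, ← integral_const_mul]
  refine integral_congr fun x _ => ?_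
  simp only [rodriguesPoly, eval_mul, eval_pow, eval_sub, eval_X, eval_one]
  rw [← neg_sub 1 x, neg_eq_neg_one_mul, mul_pow]
  ring

theorem integral_iterate_derivative_rodriguesPoly_sq (n : ℕ) :
    ∫ x in (0 : ℝ)..1, (derivative^[n] (rodriguesPoly n)).eval x ^ 2
      = (n.factorial ^ 2 : ℝ) / (2 * n + 1) := by
  have htop : derivative^[n] (derivative^[n] (rodriguesPoly n)) = C ((2 * n).factorial : ℝ) := by
    rw [← Function.iterate_add_apply, ← two_mul, ← natDegree_rodriguesPoly,
      (rodriguesPoly_monic n).iterate_derivative_natDegree]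
  have hsign : ((-1 : ℝ) ^ n) * (-1) ^ n = 1 := by
    rw [← mul_pow]
    simp
  simp_rw [sq, integral_eval_mul_iterate_derivative _ _ _ fun j hj =>
    eval_iterate_derivative_rodriguesPoly_of_lt hj, htop, eval_C]
  rw [integral_const_mul, integral_rodriguesPoly, Nat.factorial_succ]
  push_cast
  field_simp
  linear_combination hsign

theorem legP_eq_eval (n : ℕ) (x : ℝ) :
    legP n x = √(2 * n + 1) / n.factorial * (derivative^[n] (rodriguesPoly n)).eval x := by
  have hR : (fun t : ℝ => t ^ n * (t - 1) ^ n) = fun t => (rodriguesPoly n).eval t := by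
    ext t
    simp [rodriguesPoly]
  rw [legP, hR, iteratedDeriv_eval]

theorem legP_zero (x : ℝ) : legP 0 x = 1 := by
  simp [legP]

@[fun_prop]
theorem continuous_legP (n : ℕ) : Continuous (legP n) := by
  simp_rw [funext (legP_eq_eval n)]
  fun_prop

theorem integral_legP_mul_legP (i k : ℕ) :
    ∫ x in (0 : ℝ)..1, legP i x * legP k x = if i = k then 1 else 0 := by
  wlog hik : i ≤ k generalizing i k
  · simpa [mul_comm, eq_comm] using this k i (le_of_not_ge hik)
  simp_rw [legP_eq_eval, mul_mul_mul_comm _ (eval _ _), integral_const_mul]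
  rcases hik.lt_or_eq with hlt | rfl
  · rw [integral_eval_mul_iterate_derivative_rodriguesPoly
      ((natDegree_iterate_derivative_rodriguesPoly_le i).trans_lt hlt), if_neg hlt.ne, mul_zero]
  · simp_rw [← sq, integral_iterate_derivative_rodriguesPoly_sq, if_pos]
    have hsqrt : √(2 * i + 1 : ℝ) ^ 2 = 2 * i + 1 := Real.sq_sqrt (by positivity)
    field_simp
    rw [hsqrt]

theorem integral_legP (n : ℕ) : ∫ x in (0 : ℝ)..1, legP n x = if n = 0 then 1 else 0 := by
  simpa [legP_zero] using integral_legP_mul_legP n 0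

theorem integral_sum_mul_legP (s : Finset ℕ) (c : ℕ → ℝ) :
    ∫ x in (0 : ℝ)..1, ∑ n ∈ s, c n * legP n x = if 0 ∈ s then c 0 else 0 := by
  rw [integral_finsetSum fun n _ => Continuous.intervalIntegrable (by fun_prop) _ _]
  simp_rw [integral_const_mul, integral_legP, mul_ite, mul_one, mul_zero, sum_ite_eq']

theorem integral_sum_mul_legP_sq (s : Finset ℕ) (c : ℕ → ℝ) :
    ∫ x in (0 : ℝ)..1, (∑ n ∈ s, c n * legP n x) ^ 2 = ∑ n ∈ s, c n ^ 2 := by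
  simp_rw [sq, sum_mul_sum, mul_mul_mul_comm (c _)]
  rw [integral_finsetSum fun n _ => Continuous.intervalIntegrable (by fun_prop) _ _]
  refine sum_congr rfl fun n hn => ?_
  rw [integral_finsetSum fun m _ => Continuous.intervalIntegrable (by fun_prop) _ _]
  simp_rw [integral_const_mul, integral_legP_mul_legP, mul_ite, mul_one, mul_zero, sum_ite_eq,
    if_pos hn]

theorem integral_integral_mul_self (f : ℝ → ℝ) (a b : ℝ) :
    ∫ x in a..b, ∫ y in a..b, f x * f y = (∫ x in a..b, f x) ^ 2 := by
  simp_rw [integral_const_mul, integral_mul_const, sq]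

theorem Finsupp.sum_mul_mul_eq_sum_sum {ι κ R : Type*} [CommSemiring R] (α : (ι × κ) →₀ R)
    {s : Finset ι} {t : Finset κ} (hα : α.support ⊆ s ×ˢ t) (f : ι → R) (g : κ → R) :
    (α.sum fun p c => c * f p.1 * g p.2) = ∑ i ∈ s, ∑ j ∈ t, α (i, j) * f i * g j := by
  rw [Finsupp.sum_of_support_subset α hα _ (by simp), sum_product]

theorem Finsupp.exists_support_subset_range_product {R : Type*} [Zero R]
    (α : (ℕ × ℕ) →₀ R) (m : ℕ) :
    ∃ N, m ≤ N ∧ α.support ⊆ range N ×ˢ range N := by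
  obtain ⟨N, hN⟩ :=
    (α.support.image Prod.fst ∪ α.support.image Prod.snd).exists_nat_subset_range
  refine ⟨max m N, le_max_left _ _, fun p hp => ?_⟩
  have hfst := hN (mem_union_left _ (mem_image_of_mem Prod.fst hp))
  have hsnd := hN (mem_union_right _ (mem_image_of_mem Prod.snd hp))
  simp only [mem_range, mem_product] at hfst hsnd ⊢
  omega

noncomputable def legendreKernel (α : (ℕ × ℕ) →₀ ℝ) (τ σ : ℝ) : ℝ :=
  α.sum fun p c => c * legP p.1 τ * legP p.2 σ

section legendreKernel

variable {α : (ℕ × ℕ) →₀ ℝ} {N : ℕ}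

theorem legendreKernel_eq_sum_sum (hα : α.support ⊆ range N ×ˢ range N) (τ σ : ℝ) :
    legendreKernel α τ σ
      = ∑ j ∈ range N, (∑ i ∈ range N, α (i, j) * legP i τ) * legP j σ := by
  rw [legendreKernel, Finsupp.sum_mul_mul_eq_sum_sum α hα (legP · τ) (legP · σ), sum_comm]
  simp_rw [sum_mul]

theorem integral_legendreKernel_right (hN : 0 < N) (hα : α.support ⊆ range N ×ˢ range N)
    (τ : ℝ) :
    ∫ σ in (0 : ℝ)..1, legendreKernel α τ σ = ∑ i ∈ range N, α (i, 0) * legP i τ := by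
  simp_rw [legendreKernel_eq_sum_sum hα τ]
  rw [integral_sum_mul_legP, if_pos (mem_range.mpr hN)]

theorem integral_integral_integral_legendreKernel (hN : 0 < N)
    (hα : α.support ⊆ range N ×ˢ range N) :
    ∫ τ in (0 : ℝ)..1, ∫ σ in (0 : ℝ)..1, ∫ ρ in (0 : ℝ)..1,
        legendreKernel α τ σ * legendreKernel α τ ρ
      = ∑ i ∈ range N, α (i, 0) ^ 2 := by
  rw [integral_congr fun τ _ => integral_integral_mul_self (legendreKernel α τ) 0 1]
  simp_rw [integral_legendreKernel_right hN hα, integral_sum_mul_legP_sq]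

end legendreKernel

/-- For a Legendre expansion with `α(0,0) = 1/6`, `α(1,0) = √3/12`
and `α(2,0) = √5/60`, the fifth-order condition
`∫₀¹∫₀¹∫₀¹ Ā(τ,σ)Ā(τ,ρ) dρ dσ dτ = 1/20` forces `α(i,0) = 0` for all `i > 2`. -/
theorem order5_condition_ten
    (α : (ℕ × ℕ) →₀ ℝ)
    (h0 : α (0, 0) = 1 / 6) (h1 : α (1, 0) = Real.sqrt 3 / 12)
    (h2 : α (2, 0) = Real.sqrt 5 / 60)
    (A : ℝ → ℝ → ℝ)
    (hA : ∀ τ σ : ℝ, A τ σ = α.sum fun p c => c * legP p.1 τ * legP p.2 σ)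
    (hint : (∫ τ in (0:ℝ)..1, ∫ σ in (0:ℝ)..1, ∫ ρ in (0:ℝ)..1, A τ σ * A τ ρ) = 1 / 20) :
    ∀ i : ℕ, 2 < i → α (i, 0) = 0 := by
  intro i hi
  obtain ⟨N, hiN, hα⟩ := α.exists_support_subset_range_product (i + 1)
  obtain rfl : A = legendreKernel α := funext₂ hA
  rw [integral_integral_integral_legendreKernel (by omega) hα,
    ← sum_range_add_sum_Ico _ (by omega : 3 ≤ N)] at hint
  have hlow : ∑ k ∈ range 3, α (k, 0) ^ 2 = 1 / 20 := by
    simp only [sum_range_succ, sum_range_zero, h0, h1, h2, div_pow,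
      Real.sq_sqrt (by norm_num : (0 : ℝ) ≤ 3), Real.sq_sqrt (by norm_num : (0 : ℝ) ≤ 5)]
    norm_num
  have hhigh : ∑ k ∈ Ico 3 N, α (k, 0) ^ 2 = 0 := by linarith
  rw [sum_eq_zero_iff_of_nonneg fun _ _ => sq_nonneg _] at hhigh
  exact pow_eq_zero_iff two_ne_zero |>.mp (hhigh i (mem_Ico.mpr ⟨hi, by omega⟩))
end
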